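/- Let h_1(x) = −3x_{12} + 4x_{13} − x_{23} − x_{14} + 3x_{24} − 2x_{34} and h_2(x) = 4x_{12} − 6x_{13} + 3x_{23} + 2x_{14} − 5x_{24} + 2x_{34}. Then (a) every x ∈ ℝ^6 with x_{12} = x_{34} = 0, h_1(x) = 0, h_2(x) = 0 and qq(x) = 0 satisfies 2x_{14}^2 − x_{14}x_{24} − 4x_{24}^2 = 0; and (b) the set of all such x is the union of exactly two distinct lines through the origin in ℝ^6 (i.e. two distinct real points of P^5). -/

import Mathlib

/-- Coordinates of `ℝ^6` are ordered as `(x₁₂, x₁₃, x₂₃, x₁₄, x₂₄, x₃₄)`, indices `0,…,5`.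
`h₁(x) = −3x₁₂ + 4x₁₃ − x₂₃ − x₁₄ + 3x₂₄ − 2x₃₄`. -/
def h112 (x : Fin 6 → ℝ) : ℝ := -3 * x 0 + 4 * x 1 - x 2 - x 3 + 3 * x 4 - 2 * x 5

/-- `h₂(x) = 4x₁₂ − 6x₁₃ + 3x₂₃ + 2x₁₄ − 5x₂₄ + 2x₃₄`. -/
def h212 (x : Fin 6 → ℝ) : ℝ := 4 * x 0 - 6 * x 1 + 3 * x 2 + 2 * x 3 - 5 * x 4 + 2 * x 5

/-- The Plücker quadric `qq(x) = x₁₂x₃₄ − x₁₃x₂₄ + x₁₄x₂₃`. -/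
def qq12 (x : Fin 6 → ℝ) : ℝ := x 0 * x 5 - x 1 * x 4 + x 3 * x 2

/-!
On `x₁₂ = x₃₄ = 0` the two hyperplanes `h₁ = h₂ = 0` solve for `x₁₃` and `x₂₃` in terms of
`x₁₄, x₂₄`, and the Plücker quadric then becomes the binary form `2x₁₄² − x₁₄x₂₄ − 4x₂₄²`, of
discriminant `33`. Its two real linear factors `4x₁₄ − (1 ± √33)x₂₄` cut out the two lines.
-/

def residualSet : Set (Fin 6 → ℝ) :=
  {x | x 0 = 0 ∧ x 5 = 0 ∧ h112 x = 0 ∧ h212 x = 0 ∧ qq12 x = 0}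

/-- For `s = ±√33` this spans the line on which `4x₁₄ = (1 + s)x₂₄`, normalised by `x₂₄ = 24`. -/
def residualLine (s : ℝ) : Fin 6 → ℝ := ![0, s - 15, 6 - 2 * s, 6 + 6 * s, 24, 0]

lemma linear_relations_of_mem_residualSet {x : Fin 6 → ℝ} (hx : x ∈ residualSet) :
    6 * x 1 = x 3 - 4 * x 4 ∧ 3 * x 2 = x 4 - x 3 := by
  obtain ⟨h0, h5, h1, h2, -⟩ := hx
  simp only [h112, h212, h0, h5] at h1 h2
  constructor <;> linarith

lemma quadratic_of_mem_residualSet {x : Fin 6 → ℝ} (hx : x ∈ residualSet) :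
    2 * x 3 ^ 2 - x 3 * x 4 - 4 * x 4 ^ 2 = 0 := by
  obtain ⟨h13, h23⟩ := linear_relations_of_mem_residualSet hx
  have hq : qq12 x = 0 := hx.2.2.2.2
  simp only [qq12, hx.1] at hq
  linear_combination -6 * hq + 2 * x 3 * h23 - x 4 * h13

lemma smul_residualLine_mem {s : ℝ} (hs : s ^ 2 = 33) (t : ℝ) :
    t • residualLine s ∈ residualSet := by
  simp only [residualSet, Set.mem_ofPred_eq, h112, h212, qq12, residualLine, Pi.smul_apply,
    smul_eq_mul, Matrix.cons_val, Matrix.cons_val_zero, Matrix.cons_val_one, Fin.isValue]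
  exact ⟨by ring, by ring, by ring, by ring, by linear_combination (-12 * t ^ 2) * hs⟩

lemma eq_smul_residualLine {s : ℝ} {x : Fin 6 → ℝ} (hx : x ∈ residualSet)
    (h : 4 * x 3 = (1 + s) * x 4) : x = (x 4 / 24) • residualLine s := by
  obtain ⟨h13, h23⟩ := linear_relations_of_mem_residualSet hx
  ext i
  fin_cases i <;> simp only [Fin.zero_eta, Fin.mk_one, Fin.reduceFinMk, Fin.isValue, residualLine,
      Pi.smul_apply, smul_eq_mul, Matrix.cons_val, Matrix.cons_val_zero, Matrix.cons_val_one]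
  · linear_combination hx.1
  · linear_combination (4 * h13 + h) / 24
  · linear_combination (4 * h23 - h) / 12
  · linear_combination h / 4
  · ring
  · linear_combination hx.2.1

lemma residualLine_ne_zero (s : ℝ) : residualLine s ≠ 0 := fun h => by
  simpa [residualLine] using congrFun h 4

lemma residualLine_ne_smul {s s' : ℝ} (hss' : s ≠ s') (t : ℝ) :
    residualLine s' ≠ t • residualLine s := fun h => by
  have h3 := congrFun h 3
  have h4 := congrFun h 4
  simp only [residualLine, Pi.smul_apply, smul_eq_mul, Matrix.cons_val, Fin.isValue] at h3 h4
  obtain rfl : t = 1 := by linarith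
  exact hss' (by linarith)

lemma residualSet_eq :
    residualSet = {x | ∃ t : ℝ, x = t • residualLine √33} ∪
      {x | ∃ t : ℝ, x = t • residualLine (-√33)} := by
  have hs : √33 ^ 2 = 33 := Real.sq_sqrt (by norm_num)
  have hs' : (-√33) ^ 2 = 33 := by rw [neg_sq, hs]
  ext x
  constructor
  · intro hx
    have hfactor : (4 * x 3 - (1 + √33) * x 4) * (4 * x 3 - (1 + -√33) * x 4) = 0 := by
      linear_combination 8 * quadratic_of_mem_residualSet hx - x 4 ^ 2 * hs
    rcases mul_eq_zero.mp hfactor with h | h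
    · exact Or.inl ⟨_, eq_smul_residualLine hx (sub_eq_zero.mp h)⟩
    · exact Or.inr ⟨_, eq_smul_residualLine hx (sub_eq_zero.mp h)⟩
  · rintro (⟨t, rfl⟩ | ⟨t, rfl⟩)
    exacts [smul_residualLine_mem hs t, smul_residualLine_mem hs' t]

theorem stmt12 :
    (∀ x : Fin 6 → ℝ, x 0 = 0 → x 5 = 0 → h112 x = 0 → h212 x = 0 → qq12 x = 0 →
      2 * x 3 ^ 2 - x 3 * x 4 - 4 * x 4 ^ 2 = 0) ∧
    (∃ u v : Fin 6 → ℝ, u ≠ 0 ∧ v ≠ 0 ∧ (¬ ∃ t : ℝ, v = t • u) ∧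
      {x : Fin 6 → ℝ | x 0 = 0 ∧ x 5 = 0 ∧ h112 x = 0 ∧ h212 x = 0 ∧ qq12 x = 0} =
        {x | ∃ t : ℝ, x = t • u} ∪ {x | ∃ t : ℝ, x = t • v}) := by
  have hsqrt : √33 ≠ -√33 := by
    have : 0 < √33 := by positivity
    linarith
  exact ⟨fun x h0 h5 h1 h2 hq => quadratic_of_mem_residualSet ⟨h0, h5, h1, h2, hq⟩,
    residualLine √33, residualLine (-√33), residualLine_ne_zero _, residualLine_ne_zero _,
    fun ⟨t, ht⟩ => residualLine_ne_smul hsqrt t ht, residualSet_eq⟩
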